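/- Let π_w ∪ π_b be a complementary non-crossing partition of [2n]. Then for every i ∈ [2n], the block of π_w ∪ π_b containing i and the block containing i+1 (mod 2n) are adjacent. Moreover this property characterizes π_b: it is the unique non-crossing partition of odd_n with this property such that π_w ∪ π_b is non-crossing. -/
import Mathlib


def IsPartitionOn (S : Finset ℕ) (P : Finset (Finset ℕ)) : Prop :=
  (∀ b ∈ P, b.Nonempty) ∧
  (∀ b ∈ P, ∀ c ∈ P, b ≠ c → Disjoint b c) ∧
  (∀ x, x ∈ S ↔ ∃ b ∈ P, x ∈ b)

def Crossing (P : Finset (Finset ℕ)) : Prop :=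
  ∃ b ∈ P, ∃ b' ∈ P, b ≠ b' ∧
    ∃ a ∈ b, ∃ c ∈ b, ∃ x ∈ b', ∃ y ∈ b', a < x ∧ x < c ∧ c < y

def NonCrossing (P : Finset (Finset ℕ)) : Prop := ¬ Crossing P

def Refines (σ π : Finset (Finset ℕ)) : Prop := ∀ c ∈ σ, ∃ b ∈ π, c ⊆ b

def evens (n : ℕ) : Finset ℕ := (Finset.range n).image (fun m => 2 * m)

def odds (n : ℕ) : Finset ℕ := (Finset.range n).image (fun m => 2 * m + 1)

/-- Two blocks `a`, `b` are adjacent (in `[2n]`, indices mod `2n`) if there are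
`i ∈ a`, `j ∈ b` with `i + 1 ∈ b` and `j + 1 ∈ a`. -/
def AdjacentBlocks (n : ℕ) (a b : Finset ℕ) : Prop :=
  ∃ i ∈ a, ∃ j ∈ b, (i + 1) % (2 * n) ∈ b ∧ (j + 1) % (2 * n) ∈ a

/-- `πb` is the partition of the odds complementary to `πw`. -/
def IsComplementary (n : ℕ) (πw πb : Finset (Finset ℕ)) : Prop :=
  IsPartitionOn (evens n) πw ∧ IsPartitionOn (odds n) πb ∧
  NonCrossing (πw ∪ πb) ∧
  ∀ σb : Finset (Finset ℕ),
    IsPartitionOn (odds n) σb → NonCrossing (πw ∪ σb) → Refines σb πb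

namespace CompAux

lemma mem_evens_iff {n x : ℕ} : x ∈ evens n ↔ x % 2 = 0 ∧ x < 2 * n := by
  simp only [evens, Finset.mem_image, Finset.mem_range]
  constructor
  · rintro ⟨m, hm, rfl⟩; omega
  · rintro ⟨h1, h2⟩; exact ⟨x / 2, by omega, by omega⟩

lemma mem_odds_iff {n x : ℕ} : x ∈ odds n ↔ x % 2 = 1 ∧ x < 2 * n := by
  simp only [odds, Finset.mem_image, Finset.mem_range]
  constructor
  · rintro ⟨m, hm, rfl⟩; omega
  · rintro ⟨h1, h2⟩; exact ⟨x / 2, by omega, by omega⟩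

lemma crossing_mono {P Q : Finset (Finset ℕ)} (h : P ⊆ Q) : Crossing P → Crossing Q := by
  rintro ⟨b, hb, b', hb', hne, rest⟩
  exact ⟨b, h hb, b', h hb', hne, rest⟩

/-- Some block of `πw` separates `o` and `o'`. -/
def Sep (πw : Finset (Finset ℕ)) (o o' : ℕ) : Prop :=
  ∃ b ∈ πw, ∃ e ∈ b, ∃ f ∈ b,
    min o o' < e ∧ e < max o o' ∧ (f < min o o' ∨ max o o' < f)

lemma sep_comm (πw : Finset (Finset ℕ)) (o o' : ℕ) : Sep πw o o' ↔ Sep πw o' o := by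
  unfold Sep
  rw [min_comm o o', max_comm o o']

lemma part_block_subset {S : Finset ℕ} {P : Finset (Finset ℕ)} (h : IsPartitionOn S P)
    {b : Finset ℕ} (hb : b ∈ P) : b ⊆ S :=
  fun x hx => (h.2.2 x).mpr ⟨b, hb, hx⟩

lemma part_exists {S : Finset ℕ} {P : Finset (Finset ℕ)} (h : IsPartitionOn S P)
    {x : ℕ} (hx : x ∈ S) : ∃ b ∈ P, x ∈ b := (h.2.2 x).mp hx

lemma part_eq {S : Finset ℕ} {P : Finset (Finset ℕ)} (h : IsPartitionOn S P)
    {b c : Finset ℕ} (hb : b ∈ P) (hc : c ∈ P) {x : ℕ} (hxb : x ∈ b) (hxc : x ∈ c) : b = c := by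
  by_contra hne
  exact absurd hxc (Finset.disjoint_left.mp (h.2.1 b hb c hc hne) hxb)

lemma even_mem {n : ℕ} {πw : Finset (Finset ℕ)} (hpw : IsPartitionOn (evens n) πw)
    {b : Finset ℕ} (hb : b ∈ πw) {x : ℕ} (hx : x ∈ b) : x % 2 = 0 ∧ x < 2 * n :=
  mem_evens_iff.mp (part_block_subset hpw hb hx)

lemma odd_mem {n : ℕ} {σ : Finset (Finset ℕ)} (hs : IsPartitionOn (odds n) σ)
    {b : Finset ℕ} (hb : b ∈ σ) {x : ℕ} (hx : x ∈ b) : x % 2 = 1 ∧ x < 2 * n :=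
  mem_odds_iff.mp (part_block_subset hs hb hx)

lemma mod_pred {n x : ℕ} (h1 : 1 ≤ x) (h2 : x < 2 * n) :
    (x + (2 * n - 1)) % (2 * n) = x - 1 := by
  have h3 : x + (2 * n - 1) = (x - 1) + 2 * n := by omega
  rw [h3, Nat.add_mod_right, Nat.mod_eq_of_lt (by omega)]

lemma mod_pred_zero {n : ℕ} (hn : 1 ≤ n) : ((0 : ℕ) + (2 * n - 1)) % (2 * n) = 2 * n - 1 := by
  rw [zero_add, Nat.mod_eq_of_lt (by omega)]

lemma mod_pred_succ {n j : ℕ} (h : j < 2 * n) :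
    (((j + 1) % (2 * n)) + (2 * n - 1)) % (2 * n) = j := by
  by_cases hj : j + 1 < 2 * n
  · rw [Nat.mod_eq_of_lt hj, mod_pred (by omega) hj]
    omega
  · have h1 : j + 1 = 2 * n := by omega
    rw [h1, Nat.mod_self, mod_pred_zero (by omega)]
    omega

lemma mod_succ_pred {n x : ℕ} (h2 : x < 2 * n) :
    (((x + (2 * n - 1)) % (2 * n)) + 1) % (2 * n) = x := by
  rcases Nat.eq_zero_or_pos x with rfl | hx
  · rw [mod_pred_zero (by omega)]
    have : (2 * n - 1) + 1 = 2 * n := by omega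
    rw [this, Nat.mod_self]
  · rw [mod_pred hx h2]
    have : (x - 1) + 1 = x := by omega
    rw [this, Nat.mod_eq_of_lt h2]


/-- cyclically next element of `B` after `i`. -/
def nxt (B : Finset ℕ) (i : ℕ) : ℕ :=
  if h : (B.filter fun x => i < x).Nonempty then (B.filter fun x => i < x).min' h
  else if h2 : B.Nonempty then B.min' h2 else 0

/-- cyclically previous element of `B` before `e`. -/
def prv (B : Finset ℕ) (e : ℕ) : ℕ :=
  if h : (B.filter fun x => x < e).Nonempty then (B.filter fun x => x < e).max' h
  else if h2 : B.Nonempty then B.max' h2 else 0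

lemma nxt_mem {B : Finset ℕ} {i : ℕ} (hi : i ∈ B) : nxt B i ∈ B := by
  unfold nxt
  split_ifs with h h2
  · exact Finset.mem_of_mem_filter _ (Finset.min'_mem _ h)
  · exact Finset.min'_mem _ h2
  · exact absurd ⟨i, hi⟩ h2

lemma prv_mem {B : Finset ℕ} {e : ℕ} (he : e ∈ B) : prv B e ∈ B := by
  unfold prv
  split_ifs with h h2
  · exact Finset.mem_of_mem_filter _ (Finset.max'_mem _ h)
  · exact Finset.max'_mem _ h2
  · exact absurd ⟨e, he⟩ h2

lemma nxt_case1 {B : Finset ℕ} {i : ℕ} (h : (B.filter fun x => i < x).Nonempty) :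
    i < nxt B i ∧ ∀ y ∈ B, i < y → nxt B i ≤ y := by
  unfold nxt
  rw [dif_pos h]
  refine ⟨(Finset.mem_filter.mp (Finset.min'_mem _ h)).2, ?_⟩
  intro y hy hiy
  exact Finset.min'_le _ _ (Finset.mem_filter.mpr ⟨hy, hiy⟩)

lemma nxt_case2 {B : Finset ℕ} {i : ℕ} (hi : i ∈ B)
    (h : ¬ (B.filter fun x => i < x).Nonempty) :
    ∀ y ∈ B, nxt B i ≤ y := by
  unfold nxt
  rw [dif_neg h, dif_pos ⟨i, hi⟩]
  intro y hy
  exact Finset.min'_le _ _ hy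

lemma filter_empty_all {B : Finset ℕ} {i : ℕ}
    (h : ¬ (B.filter fun x => i < x).Nonempty) : ∀ x ∈ B, x ≤ i := by
  intro x hx
  by_contra hc
  exact h ⟨x, Finset.mem_filter.mpr ⟨hx, by omega⟩⟩

lemma nxt_prv {B : Finset ℕ} {e : ℕ} (he : e ∈ B) : nxt B (prv B e) = e := by
  unfold prv
  split_ifs with h h2
  · -- p = max of elements < e
    set p := (B.filter fun x => x < e).max' h with hp
    have hpB : p ∈ B := Finset.mem_of_mem_filter _ (Finset.max'_mem _ h)
    have hpe : p < e := (Finset.mem_filter.mp (Finset.max'_mem _ h)).2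
    have hmax : ∀ y ∈ B, y < e → y ≤ p := fun y hy hye =>
      Finset.le_max' (B.filter fun x => x < e) y (Finset.mem_filter.mpr ⟨hy, hye⟩)
    have hne : (B.filter fun x => p < x).Nonempty := ⟨e, Finset.mem_filter.mpr ⟨he, hpe⟩⟩
    obtain ⟨h1, h2'⟩ := nxt_case1 hne
    have h3 := h2' e he hpe
    have h4 : e ≤ nxt B p := by
      by_contra hc
      have h5 := hmax _ (nxt_mem hpB) (by omega)
      omega
    omega
  · -- no elements < e ; p = max B
    set p := B.max' h2 with hp
    have hpB : p ∈ B := Finset.max'_mem _ h2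
    have hall : ∀ x ∈ B, e ≤ x := by
      intro x hx
      by_contra hc
      exact h ⟨x, Finset.mem_filter.mpr ⟨hx, by omega⟩⟩
    have hmax : ∀ x ∈ B, x ≤ p := fun x hx => Finset.le_max' _ _ hx
    have hfe : ¬ (B.filter fun x => p < x).Nonempty := by
      rintro ⟨x, hx⟩
      obtain ⟨hx1, hx2⟩ := Finset.mem_filter.mp hx
      exact absurd (hmax _ hx1) (by omega)
    have h1 := nxt_case2 hpB hfe e he
    have h2'' := hall _ (nxt_mem hpB)
    omega
  · exact absurd ⟨e, he⟩ h2


/-- Two odds in the same block of a non-crossing extension are never separated. -/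
lemma noSep_of_same_block {n : ℕ} {πw σ : Finset (Finset ℕ)}
    (hpw : IsPartitionOn (evens n) πw) (hs : IsPartitionOn (odds n) σ)
    (hnc : NonCrossing (πw ∪ σ)) {c : Finset ℕ} (hc : c ∈ σ)
    {o o' : ℕ} (ho : o ∈ c) (ho' : o' ∈ c) : ¬ Sep πw o o' := by
  rintro ⟨b, hb, e, heb, f, hfb, h1, h2, h3⟩
  have hbc : b ≠ c := by
    rintro rfl
    have h4 := even_mem hpw hb heb
    have h5 := odd_mem hs hc heb
    omega
  have hminc : min o o' ∈ c := by
    rcases min_choice o o' with h4 | h4 <;> rw [h4] <;> assumption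
  have hmaxc : max o o' ∈ c := by
    rcases max_choice o o' with h4 | h4 <;> rw [h4] <;> assumption
  apply hnc
  rcases h3 with h3 | h3
  · exact ⟨b, Finset.mem_union_left _ hb, c, Finset.mem_union_right _ hc, hbc,
      f, hfb, e, heb, min o o', hminc, max o o', hmaxc, h3, h1, h2⟩
  · exact ⟨c, Finset.mem_union_right _ hc, b, Finset.mem_union_left _ hb, hbc.symm,
      min o o', hminc, max o o', hmaxc, e, heb, f, hfb, h1, h2, h3⟩

/-- KEY: `i+1` and `nxt B i - 1 (mod 2n)` are never separated. -/
lemma key_noSep {n : ℕ} {πw : Finset (Finset ℕ)} (hpw : IsPartitionOn (evens n) πw)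
    (hnc : NonCrossing πw) {B : Finset ℕ} (hB : B ∈ πw) {i : ℕ} (hi : i ∈ B) :
    ¬ Sep πw (i + 1) ((nxt B i + (2 * n - 1)) % (2 * n)) := by
  obtain ⟨hi2, hilt⟩ := even_mem hpw hB hi
  obtain ⟨hν2, hνlt⟩ := even_mem hpw hB (nxt_mem hi)
  set ν := nxt B i with hν
  rintro ⟨b, hb, e, heb, f, hfb, h1, h2, h3⟩
  obtain ⟨he2, helt⟩ := even_mem hpw hb heb
  obtain ⟨hf2, hflt⟩ := even_mem hpw hb hfb
  by_cases hcase : (B.filter fun x => i < x).Nonempty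
  · obtain ⟨hνgt, hνmin⟩ := nxt_case1 (B := B) (i := i) hcase
    rw [← hν] at hνgt hνmin
    have hνge : i + 2 ≤ ν := by omega
    rw [mod_pred (by omega) hνlt] at h1 h2 h3
    -- i + 1 < e < ν - 1
    have he1 : i + 1 < e := by omega
    have he2' : e < ν - 1 := by omega
    have hbB : b ≠ B := by
      rintro rfl
      have := hνmin e heb (by omega)
      omega
    have hdisj := Finset.disjoint_left.mp (hpw.2.1 b hb B hB hbB)
    rcases h3 with h3 | h3
    · -- f ≤ i ; f ≠ i
      have hfi : f ≠ i := by rintro rfl; exact hdisj hfb hi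
      exact hnc ⟨b, hb, B, hB, hbB, f, hfb, e, heb, i, hi, ν, nxt_mem hi,
        by omega, by omega, by omega⟩
    · -- f ≥ ν ; f ≠ ν
      have hfν : f ≠ ν := by rintro rfl; exact hdisj hfb (nxt_mem hi)
      exact hnc ⟨B, hB, b, hb, hbB.symm, i, hi, ν, nxt_mem hi, e, heb, f, hfb,
        by omega, by omega, by omega⟩
  · have hall := filter_empty_all hcase
    have hνall := nxt_case2 hi hcase
    rw [← hν] at hνall
    have hνlei : ν ≤ i := hall _ (nxt_mem hi)
    rcases Nat.eq_zero_or_pos ν with hν0 | hνpos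
    · rw [hν0, mod_pred_zero (by omega)] at h1 h2 h3
      -- i+1 < e < 2n-1
      have he1 : i + 1 < e := by omega
      have he2' : e < 2 * n - 1 := by omega
      have hbB : b ≠ B := by
        rintro rfl
        have := hall e heb
        omega
      have hdisj := Finset.disjoint_left.mp (hpw.2.1 b hb B hB hbB)
      have hf3 : f < i + 1 := by omega
      have hfi : f ≠ i := by rintro rfl; exact hdisj hfb hi
      have hf0 : f ≠ 0 := by
        rintro rfl
        exact hdisj hfb (hν0 ▸ nxt_mem hi)
      refine hnc ⟨B, hB, b, hb, ?_, ν, nxt_mem hi, i, hi, f, hfb, e, heb,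
        by omega, by omega, by omega⟩
      exact fun hEq => hbB hEq.symm
    · rw [mod_pred (by omega) hνlt] at h1 h2 h3
      -- ν - 1 < i + 1 : min = ν - 1, max = i + 1
      have he1 : ν ≤ e := by omega
      have he2' : e ≤ i := by omega
      have hbB : b ≠ B := by
        rintro rfl
        rcases h3 with h3 | h3
        · have := hνall f hfb; omega
        · have := hall f hfb; omega
      have hdisj := Finset.disjoint_left.mp (hpw.2.1 b hb B hB hbB)
      have heν : e ≠ ν := by rintro rfl; exact hdisj heb (nxt_mem hi)
      have hei : e ≠ i := by rintro rfl; exact hdisj heb hi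
      rcases h3 with h3 | h3
      · exact hnc ⟨b, hb, B, hB, hbB, f, hfb, e, heb, ν, nxt_mem hi, i, hi,
          by omega, by omega, by omega⟩
      · exact hnc ⟨B, hB, b, hb, fun hEq => hbB hEq.symm, ν, nxt_mem hi, i, hi,
          e, heb, f, hfb, by omega, by omega, by omega⟩

/-- Forcing: if `(j'-1) mod 2n` is not separated from `i+1` and `j' ∈ B ∋ i`,
then `j'` must be the cyclically-next element of `B` after `i`. -/
lemma forced {n : ℕ} {πw : Finset (Finset ℕ)} (hpw : IsPartitionOn (evens n) πw)
    {B : Finset ℕ} (hB : B ∈ πw) {i : ℕ} (hi : i ∈ B) {j' : ℕ} (hj' : j' ∈ B)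
    (hns : ¬ Sep πw (i + 1) ((j' + (2 * n - 1)) % (2 * n))) : j' = nxt B i := by
  by_contra hne
  apply hns
  obtain ⟨hi2, hilt⟩ := even_mem hpw hB hi
  obtain ⟨hν2, hνlt⟩ := even_mem hpw hB (nxt_mem hi)
  obtain ⟨hj2, hjlt⟩ := even_mem hpw hB hj'
  set ν := nxt B i with hν
  by_cases hcase : (B.filter fun x => i < x).Nonempty
  · obtain ⟨hνgt, hνmin⟩ := nxt_case1 (B := B) (i := i) hcase
    rw [← hν] at hνgt hνmin
    have hνge : i + 2 ≤ ν := by omega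
    by_cases hij : i < j'
    · have h5 := hνmin j' hj' hij
      have h6 : ν + 2 ≤ j' := by omega
      rw [mod_pred (by omega) hjlt]
      exact ⟨B, hB, ν, nxt_mem hi, i, hi, by omega, by omega, by omega⟩
    · rcases Nat.eq_zero_or_pos j' with rfl | hjpos
      · rw [mod_pred_zero (by omega)]
        exact ⟨B, hB, ν, nxt_mem hi, 0, hj', by omega, by omega, by omega⟩
      · rw [mod_pred (by omega) hjlt]
        exact ⟨B, hB, i, hi, ν, nxt_mem hi, by omega, by omega, by omega⟩
  · have hall := filter_empty_all hcase
    have hνall := nxt_case2 hi hcase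
    rw [← hν] at hνall
    have h5 := hνall j' hj'
    have h6 : ν + 2 ≤ j' := by omega
    have h7 := hall j' hj'
    rw [mod_pred (by omega) hjlt]
    exact ⟨B, hB, j', hj', ν, nxt_mem hi, by omega, by omega, by omega⟩


/-- Non-separated odds lie in a common block of `πb` (by maximality). -/
lemma noSep_imp_pib {n : ℕ} {πw πb : Finset (Finset ℕ)} (h : IsComplementary n πw πb)
    {o o' : ℕ} (ho : o ∈ odds n) (ho' : o' ∈ odds n) (hns : ¬ Sep πw o o') :
    ∃ c ∈ πb, o ∈ c ∧ o' ∈ c := by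
  by_cases heq : o = o'
  · subst heq
    obtain ⟨c, hc, hoc⟩ := part_exists h.2.1 ho
    exact ⟨c, hc, hoc, hoc⟩
  set σ₀ : Finset (Finset ℕ) :=
    insert {o, o'} (((odds n) \ {o, o'}).image fun x => ({x} : Finset ℕ)) with hσ₀
  have hmem : ∀ {d : Finset ℕ}, d ∈ σ₀ →
      d = {o, o'} ∨ ∃ x, x ∈ odds n ∧ x ≠ o ∧ x ≠ o' ∧ d = {x} := by
    intro d hd
    rcases Finset.mem_insert.mp hd with hd | hd
    · exact Or.inl hd
    · obtain ⟨x, hx, rfl⟩ := Finset.mem_image.mp hd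
      obtain ⟨hx1, hx2⟩ := Finset.mem_sdiff.mp hx
      simp only [Finset.mem_insert, Finset.mem_singleton, not_or] at hx2
      exact Or.inr ⟨x, hx1, hx2.1, hx2.2, rfl⟩
  have hoo : o ∈ ({o, o'} : Finset ℕ) := by simp
  have ho'o : o' ∈ ({o, o'} : Finset ℕ) := by simp
  have hpart : IsPartitionOn (odds n) σ₀ := by
    refine ⟨?_, ?_, ?_⟩
    · intro b hb
      rcases hmem hb with rfl | ⟨x, _, _, _, rfl⟩
      · exact ⟨o, hoo⟩
      · exact ⟨x, by simp⟩
    · intro b hb c hc hne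
      rw [Finset.disjoint_left]
      intro a hab hac
      rcases hmem hb with rfl | ⟨x, hx, hxo, hxo', rfl⟩ <;>
        rcases hmem hc with rfl | ⟨y, hy, hyo, hyo', rfl⟩
      · exact hne rfl
      · simp only [Finset.mem_insert, Finset.mem_singleton] at hab hac
        subst hac
        rcases hab with rfl | rfl
        · exact hyo rfl
        · exact hyo' rfl
      · simp only [Finset.mem_insert, Finset.mem_singleton] at hab hac
        subst hab
        rcases hac with rfl | rfl
        · exact hxo rfl
        · exact hxo' rfl
      · simp only [Finset.mem_singleton] at hab hac
        subst hab; subst hac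
        exact hne rfl
    · intro x
      constructor
      · intro hx
        by_cases hxo : x = o ∨ x = o'
        · refine ⟨{o, o'}, Finset.mem_insert_self _ _, ?_⟩
          rcases hxo with rfl | rfl
          · exact hoo
          · exact ho'o
        · push_neg at hxo
          refine ⟨{x}, Finset.mem_insert_of_mem (Finset.mem_image_of_mem _
            (Finset.mem_sdiff.mpr ⟨hx, ?_⟩)), by simp⟩
          simp only [Finset.mem_insert, Finset.mem_singleton, not_or]
          exact hxo
      · rintro ⟨b, hb, hxb⟩
        rcases hmem hb with rfl | ⟨y, hy, _, _, rfl⟩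
        · rcases Finset.mem_insert.mp hxb with rfl | hx2
          · exact ho
          · rw [Finset.mem_singleton.mp hx2]; exact ho'
        · rw [Finset.mem_singleton.mp hxb]; exact hy
  have hncw : NonCrossing πw := fun hcr =>
    h.2.2.1 (crossing_mono Finset.subset_union_left hcr)
  have hnc0 : NonCrossing (πw ∪ σ₀) := by
    rintro ⟨b, hb, b', hb', hne, a, hab, cc, hcb, x, hxb', y, hyb', h1, h2, h3⟩
    have h2elt : ∀ {d : Finset ℕ} {u v : ℕ}, u ∈ d → v ∈ d → u < v →
        d ∈ πw ∪ σ₀ → d ∈ πw ∨ d = {o, o'} := by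
      intro d u v hu hv huv hd
      rcases Finset.mem_union.mp hd with hd | hd
      · exact Or.inl hd
      · rcases hmem hd with rfl | ⟨z, _, _, _, rfl⟩
        · exact Or.inr rfl
        · simp only [Finset.mem_singleton] at hu hv
          omega
    have hB1 := h2elt hab hcb (by omega) hb
    have hB2 := h2elt hxb' hyb' (by omega) hb'
    rcases hB1 with hbw | rfl <;> rcases hB2 with hb'w | rfl
    · exact hncw ⟨b, hbw, b', hb'w, hne, a, hab, cc, hcb, x, hxb', y, hyb', h1, h2, h3⟩
    · -- b ∈ πw, b' = {o,o'} : x < y both in {o,o'}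
      apply hns
      simp only [Finset.mem_insert, Finset.mem_singleton] at hxb' hyb'
      rcases hxb' with rfl | rfl <;> rcases hyb' with rfl | rfl
      · omega
      · exact ⟨b, hbw, cc, hcb, a, hab, by omega, by omega, Or.inl (by omega)⟩
      · exact ⟨b, hbw, cc, hcb, a, hab, by omega, by omega, Or.inl (by omega)⟩
      · omega
    · -- b = {o,o'}, b' ∈ πw : a < cc both in {o,o'}
      apply hns
      simp only [Finset.mem_insert, Finset.mem_singleton] at hab hcb
      rcases hab with rfl | rfl <;> rcases hcb with rfl | rfl
      · omega
      · exact ⟨b', hb'w, x, hxb', y, hyb', by omega, by omega, Or.inr (by omega)⟩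
      · exact ⟨b', hb'w, x, hxb', y, hyb', by omega, by omega, Or.inr (by omega)⟩
      · omega
    · exact hne rfl
  obtain ⟨b, hb, hsub⟩ := h.2.2.2 σ₀ hpart hnc0 {o, o'} (Finset.mem_insert_self _ _)
  exact ⟨b, hb, hsub hoo, hsub ho'o⟩


/-- Main induction: with the adjacency property, non-separated odds share a σ-block. -/
lemma main_ind {n : ℕ} {πw σ : Finset (Finset ℕ)}
    (hpw : IsPartitionOn (evens n) πw) (hs : IsPartitionOn (odds n) σ)
    (hnc : NonCrossing (πw ∪ σ))
    (hadj : ∀ (i : ℕ) (bi bj : Finset ℕ), i < 2 * n → bi ∈ πw ∪ σ → bj ∈ πw ∪ σ →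
        i ∈ bi → (i + 1) % (2 * n) ∈ bj → AdjacentBlocks n bi bj) :
    ∀ o o', o ∈ odds n → o' ∈ odds n → o ≤ o' → ¬ Sep πw o o' →
      ∃ c ∈ σ, o ∈ c ∧ o' ∈ c := by
  have hncw : NonCrossing πw := fun hcr =>
    hnc (crossing_mono Finset.subset_union_left hcr)
  have H : ∀ d o o', o' - o ≤ d → o ∈ odds n → o' ∈ odds n → o ≤ o' → ¬ Sep πw o o' →
      ∃ c ∈ σ, o ∈ c ∧ o' ∈ c := by
    intro d
    induction d with
    | zero =>
      intro o o' h1 ho ho' h2 _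
      have heq : o = o' := by omega
      subst heq
      obtain ⟨c, hc, hoc⟩ := part_exists hs ho
      exact ⟨c, hc, hoc, hoc⟩
    | succ d IH =>
      intro o o' hd ho ho' hle hns
      rcases eq_or_lt_of_le hle with rfl | hlt
      · obtain ⟨c, hc, hoc⟩ := part_exists hs ho
        exact ⟨c, hc, hoc, hoc⟩
      obtain ⟨ho2, holt⟩ := mem_odds_iff.mp ho
      obtain ⟨ho'2, ho'lt⟩ := mem_odds_iff.mp ho'
      -- the even block containing o' - 1
      obtain ⟨B, hB, hiB⟩ := part_exists hpw
        (mem_evens_iff.mpr ⟨by omega, by omega⟩ : o' - 1 ∈ evens n)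
      -- every element of B lies strictly between o and o'
      have hBin : ∀ f ∈ B, o < f ∧ f < o' := by
        intro f hf
        obtain ⟨hf2, hflt⟩ := even_mem hpw hB hf
        by_contra hcon
        apply hns
        exact ⟨B, hB, o' - 1, hiB, f, hf, by omega, by omega, by omega⟩
      have hfilter : ¬ (B.filter fun x => o' - 1 < x).Nonempty := by
        rintro ⟨x, hx⟩
        obtain ⟨hx1, hx2⟩ := Finset.mem_filter.mp hx
        have := (hBin x hx1).2
        omega
      have hνall := nxt_case2 hiB hfilter
      have hνB := nxt_mem hiB
      obtain ⟨hν2, hνlt⟩ := even_mem hpw hB hνB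
      obtain ⟨hνgt, hνlt'⟩ := hBin _ hνB
      set ν := nxt B (o' - 1) with hνdef
      -- adjacency at i = o' - 1
      obtain ⟨bj, hbj, ho'bj⟩ := part_exists hs ho'
      have hi1 : (o' - 1 + 1) % (2 * n) = o' := by
        rw [show o' - 1 + 1 = o' by omega, Nat.mod_eq_of_lt ho'lt]
      obtain ⟨a, haB, j, hjbj, ha1, hj1⟩ := hadj (o' - 1) B bj (by omega)
        (Finset.mem_union_left _ hB) (Finset.mem_union_right _ hbj) hiB
        (by rw [hi1]; exact ho'bj)
      obtain ⟨hj2, hjlt⟩ := odd_mem hs hbj hjbj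
      have hrel : ((j + 1) % (2 * n) + (2 * n - 1)) % (2 * n) = j := mod_pred_succ hjlt
      have hnsj : ¬ Sep πw o' j := noSep_of_same_block hpw hs hnc hbj ho'bj hjbj
      have hns' : ¬ Sep πw (o' - 1 + 1) (((j + 1) % (2 * n) + (2 * n - 1)) % (2 * n)) := by
        rw [hrel, show o' - 1 + 1 = o' by omega]
        exact hnsj
      have hforced := forced hpw hB hiB hj1 hns'
      rw [← hνdef] at hforced
      rw [hforced, mod_pred (by omega) hνlt] at hrel
      -- hrel : ν - 1 = j
      by_cases ho'' : ν - 1 = o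
      · have hoj : o ∈ bj := by
          rw [show o = j by omega]
          exact hjbj
        exact ⟨bj, hbj, hoj, ho'bj⟩
      · have ho''mem : ν - 1 ∈ odds n := mem_odds_iff.mpr ⟨by omega, by omega⟩
        have hnso'' : ¬ Sep πw o (ν - 1) := by
          rintro ⟨b, hb, e, heb, f, hfb, h1, h2, h3⟩
          obtain ⟨he2, helt⟩ := even_mem hpw hb heb
          obtain ⟨hf2, hflt⟩ := even_mem hpw hb hfb
          have he3 : o < e ∧ e < ν - 1 := by omega
          have hbB : b ≠ B := by
            rintro rfl
            have := hνall e heb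
            omega
          have hdisj := Finset.disjoint_left.mp (hpw.2.1 b hb B hB hbB)
          have hf4 : f < o ∨ ν - 1 < f := by omega
          rcases hf4 with hf4 | hf4
          · exact hns ⟨b, hb, e, heb, f, hfb, by omega, by omega, Or.inl (by omega)⟩
          · by_cases hfo' : o' < f
            · exact hns ⟨b, hb, e, heb, f, hfb, by omega, by omega, Or.inr (by omega)⟩
            · have hfν : f ≠ ν := by rintro rfl; exact hdisj hfb hνB
              have hfi : f ≠ o' - 1 := by rintro rfl; exact hdisj hfb hiB
              have hνi : ν ≤ o' - 1 := hνall _ hiB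
              exact hnc ⟨b, Finset.mem_union_left _ hb, B, Finset.mem_union_left _ hB,
                hbB, e, heb, f, hfb, ν, hνB, o' - 1, hiB, by omega, by omega, by omega⟩
        obtain ⟨c, hc, hoc, ho''c⟩ := IH o (ν - 1) (by omega) ho ho''mem (by omega) hnso''
        have hceq : c = bj := part_eq hs hc hbj ho''c (by rw [hrel]; exact hjbj)
        exact ⟨c, hc, hoc, hceq ▸ ho'bj⟩
  exact fun o o' ho ho' hle hns => H (o' - o) o o' le_rfl ho ho' hle hns

end CompAux

/-- In a complementary non-crossing partition `πw ∪ πb` of `[2n]`, for every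
`i ∈ [2n]` the block containing `i` and the block containing `i + 1 (mod 2n)`
are adjacent; moreover this property characterizes `πb` among the non-crossing
partitions of the odds making `πw ∪ πb` non-crossing. -/
theorem complementary_adjacent_and_unique (n : ℕ)
    (πw πb : Finset (Finset ℕ)) (h : IsComplementary n πw πb) :
    (∀ (i : ℕ) (bi bj : Finset ℕ), i < 2 * n → bi ∈ πw ∪ πb → bj ∈ πw ∪ πb →
        i ∈ bi → (i + 1) % (2 * n) ∈ bj → AdjacentBlocks n bi bj) ∧
    (∀ σb : Finset (Finset ℕ),
        IsPartitionOn (odds n) σb → NonCrossing (πw ∪ σb) →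
        (∀ (i : ℕ) (bi bj : Finset ℕ), i < 2 * n → bi ∈ πw ∪ σb → bj ∈ πw ∪ σb →
            i ∈ bi → (i + 1) % (2 * n) ∈ bj → AdjacentBlocks n bi bj) →
        σb = πb) := by
  open CompAux in
  obtain ⟨hpw, hpb, hnc, hmax⟩ := h
  have hncw : NonCrossing πw := fun hcr =>
    hnc (CompAux.crossing_mono Finset.subset_union_left hcr)
  constructor
  · -- adjacency
    intro i bi bj hilt hbi hbj hibi hjbj
    have hn1 : 1 ≤ n := by omega
    rcases Finset.mem_union.mp hbi with hbiw | hbib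
    · -- i even
      obtain ⟨hi2, _⟩ := CompAux.even_mem hpw hbiw hibi
      have hi1lt : i + 1 < 2 * n := by omega
      have hmod : (i + 1) % (2 * n) = i + 1 := Nat.mod_eq_of_lt hi1lt
      have hjbj' : i + 1 ∈ bj := by rw [hmod] at hjbj; exact hjbj
      have hbjb : bj ∈ πb := by
        rcases Finset.mem_union.mp hbj with hw | hb
        · obtain ⟨h4, _⟩ := CompAux.even_mem hpw hw hjbj'
          omega
        · exact hb
      have hkey := CompAux.key_noSep hpw hncw hbiw hibi
      have hνB := CompAux.nxt_mem hibi
      obtain ⟨hν2, hνlt⟩ := CompAux.even_mem hpw hbiw hνB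
      have hjmem : (CompAux.nxt bi i + (2 * n - 1)) % (2 * n) ∈ odds n := by
        rcases Nat.eq_zero_or_pos (CompAux.nxt bi i) with hz | hν1
        · rw [hz, CompAux.mod_pred_zero hn1]
          exact CompAux.mem_odds_iff.mpr ⟨by omega, by omega⟩
        · rw [CompAux.mod_pred (by omega) hνlt]
          exact CompAux.mem_odds_iff.mpr ⟨by omega, by omega⟩
      have ho1 : i + 1 ∈ odds n := CompAux.mem_odds_iff.mpr ⟨by omega, by omega⟩
      obtain ⟨c, hcπb, hc1, hc2⟩ :=
        CompAux.noSep_imp_pib ⟨hpw, hpb, hnc, hmax⟩ ho1 hjmem hkey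
      have hceq : c = bj := CompAux.part_eq hpb hcπb hbjb hc1 hjbj'
      refine ⟨i, hibi, (CompAux.nxt bi i + (2 * n - 1)) % (2 * n), hceq ▸ hc2, hjbj, ?_⟩
      rw [CompAux.mod_succ_pred hνlt]
      exact hνB
    · -- i odd
      obtain ⟨hi2, _⟩ := CompAux.odd_mem hpb hbib hibi
      have hemod : (i + 1 < 2 * n ∧ (i + 1) % (2 * n) = i + 1) ∨
          (i = 2 * n - 1 ∧ (i + 1) % (2 * n) = 0) := by
        by_cases hi1 : i + 1 < 2 * n
        · exact Or.inl ⟨hi1, Nat.mod_eq_of_lt hi1⟩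
        · refine Or.inr ⟨by omega, ?_⟩
          rw [show i + 1 = 2 * n by omega, Nat.mod_self]
      have hbjw : bj ∈ πw := by
        rcases Finset.mem_union.mp hbj with hw | hb
        · exact hw
        · obtain ⟨h4, _⟩ := CompAux.odd_mem hpb hb hjbj
          rcases hemod with ⟨h5, h6⟩ | ⟨h5, h6⟩ <;> omega
      have hpB : CompAux.prv bj ((i + 1) % (2 * n)) ∈ bj := CompAux.prv_mem hjbj
      have hnp := CompAux.nxt_prv hjbj
      set p := CompAux.prv bj ((i + 1) % (2 * n)) with hpdef
      obtain ⟨hp2, hplt⟩ := CompAux.even_mem hpw hbjw hpB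
      have hkey := CompAux.key_noSep hpw hncw hbjw hpB
      rw [hnp] at hkey
      have hei : ((i + 1) % (2 * n) + (2 * n - 1)) % (2 * n) = i := by
        rcases hemod with ⟨h4, h4'⟩ | ⟨h4, h5⟩
        · rw [h4', CompAux.mod_pred (by omega) h4]
          omega
        · rw [h5, CompAux.mod_pred_zero (by omega)]
          omega
      rw [hei] at hkey
      have hp1odd : p + 1 ∈ odds n := CompAux.mem_odds_iff.mpr ⟨by omega, by omega⟩
      obtain ⟨c, hcπb, hc1, hc2⟩ := CompAux.noSep_imp_pib ⟨hpw, hpb, hnc, hmax⟩ hp1odd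
        (CompAux.mem_odds_iff.mpr ⟨hi2, by omega⟩) hkey
      have hceq : c = bi := CompAux.part_eq hpb hcπb hbib hc2 hibi
      refine ⟨i, hibi, p, hpB, hjbj, ?_⟩
      rw [Nat.mod_eq_of_lt (show p + 1 < 2 * n by omega)]
      exact hceq ▸ hc1
  · -- uniqueness
    intro σb hσpart hσnc hσadj
    have hss : ∀ c ∈ σb, c ∈ πb := by
      intro c hcσ
      obtain ⟨b, hbπb, hsub⟩ := hmax σb hσpart hσnc c hcσ
      obtain ⟨o, hoc⟩ := hσpart.1 c hcσ
      have hob : o ∈ b := hsub hoc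
      have ho : o ∈ odds n := CompAux.part_block_subset hpb hbπb hob
      have hbc : b ⊆ c := by
        intro o'' ho''b
        have ho'' : o'' ∈ odds n := CompAux.part_block_subset hpb hbπb ho''b
        have hnsep : ¬ CompAux.Sep πw o o'' :=
          CompAux.noSep_of_same_block hpw hpb hnc hbπb hob ho''b
        rcases le_total o o'' with hle | hle
        · obtain ⟨d, hd, h1, h2⟩ :=
            CompAux.main_ind hpw hσpart hσnc hσadj o o'' ho ho'' hle hnsep
          have hdc : d = c := CompAux.part_eq hσpart hd hcσ h1 hoc
          exact hdc ▸ h2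
        · have hnsep' : ¬ CompAux.Sep πw o'' o :=
            fun hs => hnsep ((CompAux.sep_comm πw o o'').mpr hs)
          obtain ⟨d, hd, h1, h2⟩ :=
            CompAux.main_ind hpw hσpart hσnc hσadj o'' o ho'' ho hle hnsep'
          have hdc : d = c := CompAux.part_eq hσpart hd hcσ h2 hoc
          exact hdc ▸ h1
      have hcb : c = b := Finset.Subset.antisymm hsub hbc
      exact hcb ▸ hbπb
    apply Finset.Subset.antisymm
    · intro c hc
      exact hss c hc
    · intro b hbπb
      obtain ⟨o, hob⟩ := hpb.1 b hbπb
      have ho : o ∈ odds n := CompAux.part_block_subset hpb hbπb hob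
      obtain ⟨c, hcσ, hoc⟩ := CompAux.part_exists hσpart ho
      have hcb : c = b := CompAux.part_eq hpb (hss c hcσ) hbπb hoc hob
      exact hcb ▸ hcσ
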